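/- The derangement polynomial D_n(alpha) = sum over derangements pi of {1,...,n} of alpha^(cyc(pi)) satisfies D_n(alpha) = C_n(alpha, -alpha) = sum_{k=0}^n binomial(n,k) * (alpha)_k * (-alpha)^(n-k), as a polynomial identity in alpha. -/

import Mathlib

open Finset

noncomputable def rf {R : Type*} [CommRing R] (a : R) (k : ℕ) : R :=
  (ascPochhammer R k).eval a

noncomputable def Ch {R : Type*} [CommRing R] (a r : R) (n : ℕ) : R :=
  ∑ k ∈ Finset.range (n + 1), (n.choose k : R) * rf a k * r ^ (n - k)

/-- Number of cycles of a permutation, counting fixed points as cycles. -/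
def cyc {α : Type*} [Fintype α] [DecidableEq α] (π : Equiv.Perm α) : ℕ :=
  π.cycleType.card + (Finset.univ.filter fun i => π i = i).card

/-- Derangement cycle polynomial `D_n(α) = ∑_{π derangement of [n]} α^{cyc(π)}`. -/
noncomputable def Dder {R : Type*} [CommRing R] (n : ℕ) (α : R) : R :=
  ∑ π ∈ Finset.univ.filter (fun π : Equiv.Perm (Fin n) => ∀ i, π i ≠ i),
    α ^ cyc π


/-!
Summing `α ^ cyc π` over all permutations gives the rising factorial `(α)_n`: a permutation of
`Fin (n + 1)` is a permutation of the other points together with the image `p` of `0`; for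
`p = 0` the point `0` is a new fixed point, and for each of the `n` other choices `0` is inserted
into an existing cycle, so the weight gets the factor `α + n`. Inclusion–exclusion over the set
`T` of points forced to be fixed then gives `D_n(α) = ∑_T (-1)^|T| α^|T| (α)_(n - |T|)`, and
grouping the sets `T` by size yields the formula.
-/

open Equiv Equiv.Perm

section CycleCount

variable {β : Type*} [Fintype β] [DecidableEq β]

theorem cyc_add_card_support (σ : Perm β) :
    cyc σ + #σ.support = Multiset.card σ.cycleType + Fintype.card β := by
  rw [cyc, add_assoc, ← card_univ,
    ← card_filter_add_card_filter_not (s := univ) (fun i => σ i = i)]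
  rfl

theorem cyc_one : cyc (1 : Perm β) = Fintype.card β := by
  simpa using cyc_add_card_support (1 : Perm β)

theorem Equiv.Perm.IsCycle.cyc_add_card_support {c : Perm β} (hc : c.IsCycle) :
    cyc c + #c.support = 1 + Fintype.card β := by
  rw [_root_.cyc_add_card_support, card_cycleType_eq_one.mpr hc]

theorem Equiv.Perm.Disjoint.cyc_mul_add_card {σ τ : Perm β} (h : σ.Disjoint τ) :
    cyc (σ * τ) + Fintype.card β = cyc σ + cyc τ := by
  have hστ := _root_.cyc_add_card_support (σ * τ)
  have hσ := _root_.cyc_add_card_support σ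
  have hτ := _root_.cyc_add_card_support τ
  rw [h.cycleType_mul, Multiset.card_add, h.card_support_mul] at hστ
  omega

theorem Equiv.Perm.IsCycle.cyc_swap_mul {c : Perm β} (hc : c.IsCycle) {x : β} (hx : c x ≠ x) :
    cyc (swap x (c x) * c) = cyc c + 1 := by
  have hcyc := hc.cyc_add_card_support
  by_cases hccx : c (c x) = x
  · have hswap : c = swap x (c x) := hc.eq_swap_of_apply_apply_eq_self hx hccx
    have hone : swap x (c x) * c = 1 := by rw [← hswap, hswap, swap_mul_self]
    have hsupp : #c.support = 2 := by rw [hswap]; exact card_support_swap hx.symm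
    rw [hone, cyc_one]
    omega
  · have hsupp : #(swap x (c x) * c).support + 1 = #c.support := by
      rw [support_swap_mul_eq _ _ hccx]
      exact card_sdiff_add_card_eq_card (singleton_subset_iff.mpr (mem_support.mpr hx))
    have := (hc.swap_mul hx hccx).cyc_add_card_support
    omega

theorem cyc_swap_mul {σ : Perm β} {x : β} (hx : σ x ≠ x) :
    cyc (swap x (σ x) * σ) = cyc σ + 1 := by
  set c := σ.cycleOf x
  set d := σ * c⁻¹
  have hc : c.IsCycle := isCycle_cycleOf σ hx
  have hcx : c x = σ x := cycleOf_apply_self σ x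
  have hcd : c.Disjoint d := (disjoint_mul_inv_of_mem_cycleFactorsFinset
    (cycleOf_mem_cycleFactorsFinset_iff.mpr (mem_support.mpr hx))).symm
  have hσ : σ = c * d := by rw [hcd.commute.eq]; exact (inv_mul_cancel_right σ c).symm
  have hdisj : (swap x (c x) * c).Disjoint d :=
    hcd.mono (fun y hy => (mem_support_swap_mul_imp_mem_support_ne hy).1) le_rfl
  have h₁ := hdisj.cyc_mul_add_card
  have h₂ := hcd.cyc_mul_add_card
  rw [mul_assoc, ← hσ, hcx] at h₁
  rw [← hσ] at h₂
  have h₃ := hc.cyc_swap_mul (hcx ▸ hx)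
  rw [hcx] at h₃
  omega

theorem cyc_extendDomain {γ : Type*} [Fintype γ] [DecidableEq γ] {p : β → Prop}
    [DecidablePred p] (f : γ ≃ Subtype p) (g : Perm γ) :
    cyc (g.extendDomain f) + Fintype.card γ = cyc g + Fintype.card β := by
  have h₁ := cyc_add_card_support (g.extendDomain f)
  have h₂ := cyc_add_card_support g
  rw [cycleType_extendDomain, card_support_extend_domain] at h₁
  omega

theorem cyc_ofSubtype {p : β → Prop} [DecidablePred p] (g : Perm (Subtype p)) :
    cyc (ofSubtype g) + Fintype.card (Subtype p) = cyc g + Fintype.card β :=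
  cyc_extendDomain (Equiv.refl _) g

theorem cyc_permCongr {γ : Type*} [Fintype γ] [DecidableEq γ] (e : γ ≃ β) (g : Perm γ) :
    cyc (e.permCongr g) = cyc g := by
  have h := cyc_extendDomain (e.trans (subtypeUnivEquiv fun _ => trivial).symm) g
  have he : g.extendDomain (e.trans (subtypeUnivEquiv fun _ => trivial).symm) = e.permCongr g := by
    ext x
    rw [extendDomain_apply_subtype (p := fun _ => True) _ _ trivial]
    simp [subtypeUnivEquiv]
  rw [he, Fintype.card_congr e] at h
  omega

end CycleCount

theorem decomposeFin_symm_zero_eq_extendDomain {n : ℕ} (e : Perm (Fin n)) :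
    decomposeFin.symm (0, e) = e.extendDomain (finSuccAboveEquiv 0) := by
  ext x
  refine Fin.cases ?_ (fun i => ?_) x
  · rw [decomposeFin_symm_apply_zero, extendDomain_apply_not_subtype _ _ (by simp)]
  · have := extendDomain_apply_image e (finSuccAboveEquiv 0) i
    simp_all [finSuccAboveEquiv_apply]

theorem swap_mul_decomposeFin_symm {n : ℕ} (p : Fin (n + 1)) (e : Perm (Fin n)) :
    swap 0 p * decomposeFin.symm (p, e) = decomposeFin.symm (0, e) := by
  ext x
  refine Fin.cases ?_ (fun i => ?_) x <;> simp

theorem cyc_decomposeFin_symm_zero {n : ℕ} (e : Perm (Fin n)) :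
    cyc (decomposeFin.symm (0, e)) = cyc e + 1 := by
  have h := cyc_extendDomain (finSuccAboveEquiv 0) e
  rw [← decomposeFin_symm_zero_eq_extendDomain, Fintype.card_fin, Fintype.card_fin] at h
  omega

theorem cyc_decomposeFin_symm_of_ne_zero {n : ℕ} {p : Fin (n + 1)} (hp : p ≠ 0)
    (e : Perm (Fin n)) : cyc (decomposeFin.symm (p, e)) = cyc e := by
  have h := cyc_swap_mul (σ := decomposeFin.symm (p, e)) (x := 0)
    (by rw [decomposeFin_symm_apply_zero]; exact hp)
  rw [decomposeFin_symm_apply_zero, swap_mul_decomposeFin_symm,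
    cyc_decomposeFin_symm_zero] at h
  omega

section RisingFactorial

variable {R : Type*} [CommRing R]

theorem sum_pow_cyc_perm_fin (α : R) : ∀ n : ℕ, ∑ π : Perm (Fin n), α ^ cyc π = rf α n
  | 0 => by simp [rf, cyc_one]
  | n + 1 => by
    calc ∑ π : Perm (Fin (n + 1)), α ^ cyc π
        = ∑ e : Perm (Fin n), ∑ p : Fin (n + 1), α ^ cyc (decomposeFin.symm (p, e)) := by
          rw [← decomposeFin.symm.sum_comp, Fintype.sum_prod_type, sum_comm]
      _ = ∑ e : Perm (Fin n), (α + n) * α ^ cyc e := by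
          refine sum_congr rfl fun e _ => ?_
          simp only [Fin.sum_univ_succ, cyc_decomposeFin_symm_zero,
            cyc_decomposeFin_symm_of_ne_zero (Fin.succ_ne_zero _), sum_const, card_univ,
            Fintype.card_fin, nsmul_eq_mul, pow_succ]
          ring
      _ = rf α (n + 1) := by
          rw [← mul_sum, sum_pow_cyc_perm_fin α n, rf, rf, ascPochhammer_succ_eval, mul_comm]

theorem sum_pow_cyc_perm (β : Type*) [Fintype β] [DecidableEq β] (α : R) :
    ∑ π : Perm β, α ^ cyc π = rf α (Fintype.card β) := by
  rw [← sum_pow_cyc_perm_fin]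
  exact Fintype.sum_equiv (permCongr (Fintype.equivFin β)) _ _ fun π => by rw [cyc_permCongr]

-- The decidability instance is a parameter: at `β = Fin n` elaboration picks
-- `Nat.decidableForallFin` rather than the generic `Fintype.decidableForallFintype`.
theorem sum_pow_cyc_fixing {β : Type*} [Fintype β] [DecidableEq β] (T : Finset β)
    [DecidablePred fun π : Perm β => ∀ x ∈ T, π x = x] (α : R) :
    ∑ π ∈ univ.filter (fun π : Perm β => ∀ x ∈ T, π x = x), α ^ cyc π
      = α ^ #T * rf α (Fintype.card β - #T) := by
  have hcard : Fintype.card {x // x ∉ T} = Fintype.card β - #T := by simp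
  have hT : #T ≤ Fintype.card β := card_le_univ T
  rw [← hcard, ← sum_pow_cyc_perm, mul_sum,
    sum_subtype (p := fun π : Perm β => ∀ x, ¬x ∉ T → π x = x) _ (by simp)]
  refine (Fintype.sum_equiv (Perm.subtypeEquivSubtypePerm (· ∉ T)) _ _ fun g => ?_).symm
  have h := cyc_ofSubtype g
  rw [hcard] at h
  rw [Perm.subtypeEquivSubtypePerm_apply_coe, ← pow_add]
  congr 1
  omega

end RisingFactorial

theorem Finset.mem_inf_iff {ι γ : Type*} [Fintype γ] [DecidableEq γ] {s : Finset ι}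
    {f : ι → Finset γ} {a : γ} : a ∈ s.inf f ↔ ∀ i ∈ s, a ∈ f i := by
  simpa only [← singleton_subset_iff] using Finset.le_inf_iff (a := {a}) (s := s) (f := f)

theorem Dder_eq_sum_powerset {R : Type*} [CommRing R] (n : ℕ) (α : R) :
    Dder n α = ∑ T ∈ (univ : Finset (Fin n)).powerset, (-α) ^ #T * rf α (n - #T) := by
  have h := inclusion_exclusion_sum_inf_compl univ
    (fun i : Fin n => univ.filter fun π : Perm (Fin n) => π i = i) (fun π => α ^ cyc π)
  have hder : (univ.inf fun i : Fin n => (univ.filter fun π : Perm (Fin n) => π i = i)ᶜ)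
      = univ.filter fun π => ∀ i, π i ≠ i := by
    ext π; simp [mem_inf_iff]
  rw [hder] at h
  rw [Dder, h]
  refine sum_congr rfl fun T _ => ?_
  have hfix : (T.inf fun i => univ.filter fun π : Perm (Fin n) => π i = i)
      = univ.filter fun π => ∀ x ∈ T, π x = x := by
    ext π; simp [mem_inf_iff]
  rw [hfix, sum_pow_cyc_fixing, Fintype.card_fin, zsmul_eq_mul, neg_pow α]
  push_cast
  ring

theorem stmt8 {R : Type*} [CommRing R] (n : ℕ) (α : R) :
    Dder n α = Ch α (-α) n ∧
    Dder n α = ∑ k ∈ Finset.range (n + 1),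
      (n.choose k : R) * rf α k * (-α) ^ (n - k) := by
  have h : Dder n α = ∑ k ∈ range (n + 1), (n.choose k : R) * rf α k * (-α) ^ (n - k) := by
    rw [Dder_eq_sum_powerset, sum_powerset_apply_card (f := fun k => (-α) ^ k * rf α (n - k)),
      card_univ, Fintype.card_fin, ← sum_range_reflect]
    refine sum_congr rfl fun k hk => ?_
    have hk : k ≤ n := Nat.lt_succ_iff.mp (mem_range.mp hk)
    rw [Nat.add_sub_cancel, Nat.choose_symm hk, Nat.sub_sub_self hk, nsmul_eq_mul]
    ring
  exact ⟨h, h⟩
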